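/- arXiv:1702.03836 — 3 statements merged into one kernel-verified Lean document; each statement's English description precedes it below -/
import Mathlib

section
/- Every nonzero polynomial f ∈ ℤ[t], regarded as an element of the completed group ring ℤ̂[[t^ℤ̂]], is not a zero-divisor: if g ∈ ℤ̂[[t^ℤ̂]] satisfies f·g = 0, then g = 0. -/
/-! Write `gₙ ∈ Ẑ[t]/(tⁿ-1)` for the components of `g`. Ẑ is torsion-free, and no nonzero element
of Ẑ is divisible by every positive integer; both properties pass to the free Ẑ-modules Ẑ[t]/(tⁿ-1).

If `f` is coprime to `tⁿ-1` over ℚ, their resultant `c ≠ 0` lies in the ideal `(f, tⁿ-1)` of ℤ[t],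
so `f g = 0` gives `c gₙ = 0`, hence `gₙ = 0`.

If `(t^d-1) g = 0` and `d ∣ n`, then for every `M` the component `g_{nM}` is a multiple of
`(t^{nM}-1)/(t^d-1)`, whose image modulo `tⁿ-1` is `M (tⁿ-1)/(t^d-1)`. So `gₙ` is divisible by
every `M` and vanishes, and then so does every component.

A nonzero `f ∈ ℤ[t]` is either coprime over ℚ to every `tⁿ-1`, or divisible in ℤ[t] by a
cyclotomic polynomial `Φₘ ∣ t^m-1`; induction on the degree finishes the proof. -/

open Polynomial

set_option synthInstance.maxHeartbeats 1000000
set_option maxHeartbeats 1000000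

noncomputable section
noncomputable section

/-- The ring of profinite integers `ẐZ = lim_n ℤ/nℤ`, realized as the subring of
`∏ n : ℕ+, ZMod n` consisting of families compatible under the natural projections. -/
def ZHatSubring : Subring (∀ n : ℕ+, ZMod n) where
  carrier := {f | ∀ (m n : ℕ+) (h : (m : ℕ) ∣ (n : ℕ)), ZMod.castHom h (ZMod m) (f n) = f m}
  mul_mem' := fun {a b} ha hb m n h => by
    simp only [Pi.mul_apply, map_mul, ha m n h, hb m n h]
  one_mem' := fun m n h => map_one _
  add_mem' := fun {a b} ha hb m n h => by
    simp only [Pi.add_apply, map_add, ha m n h, hb m n h]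
  zero_mem' := fun m n h => map_zero _
  neg_mem' := fun {a} ha m n h => by
    simp only [Pi.neg_apply, map_neg, ha m n h]

/-- The profinite integers as a type. -/
abbrev ZHat : Type := ZHatSubring

instance : CommRing ZHat := inferInstance

/-- The quotient ring `R[t]/(tⁿ - 1)`. -/
abbrev CycModN (R : Type) [CommRing R] (n : ℕ+) : Type :=
  Polynomial R ⧸ Ideal.span {(X : Polynomial R) ^ (n : ℕ) - 1}

lemma X_pow_sub_one_dvd {R : Type} [CommRing R] {m n : ℕ} (h : m ∣ n) :
    (X : Polynomial R) ^ m - 1 ∣ (X : Polynomial R) ^ n - 1 := by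
  obtain ⟨k, rfl⟩ := h
  simpa [pow_mul] using sub_dvd_pow_sub_pow ((X : Polynomial R) ^ m) 1 k

/-- The natural transition map `R[t]/(tⁿ-1) → R[t]/(tᵐ-1)` for `m ∣ n`. -/
def cycTransition (R : Type) [CommRing R] {m n : ℕ+} (h : (m : ℕ) ∣ (n : ℕ)) :
    CycModN R n →+* CycModN R m :=
  Ideal.Quotient.factor
    (Ideal.span_singleton_le_span_singleton.mpr (X_pow_sub_one_dvd h))

/-- The completed group ring `R[[t^Ẑ]] = lim_n R[t]/(tⁿ-1)`, realized as the subring of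
`∏ n : ℕ+, R[t]/(tⁿ-1)` of families compatible under the transition maps. -/
def CompletedCycRing (R : Type) [CommRing R] : Subring (∀ n : ℕ+, CycModN R n) where
  carrier := {f | ∀ (m n : ℕ+) (h : (m : ℕ) ∣ (n : ℕ)), cycTransition R h (f n) = f m}
  mul_mem' := fun {a b} ha hb m n h => by
    simp only [Pi.mul_apply, map_mul, ha m n h, hb m n h]
  one_mem' := fun m n h => map_one _
  add_mem' := fun {a b} ha hb m n h => by
    simp only [Pi.add_apply, map_add, ha m n h, hb m n h]
  zero_mem' := fun m n h => map_zero _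
  neg_mem' := fun {a} ha m n h => by
    simp only [Pi.neg_apply, map_neg, ha m n h]

instance completedCycRingCommRing (R : Type) [CommRing R] :
    CommRing (CompletedCycRing R) := inferInstance

/-- The natural ring homomorphism `R[t] → R[[t^Ẑ]]`, `f ↦ (f mod (tⁿ-1))ₙ`. -/
def polyToCompleted (R : Type) [CommRing R] : Polynomial R →+* CompletedCycRing R :=
  RingHom.codRestrict (Pi.ringHom fun n => Ideal.Quotient.mk _) _
    (fun f m n h => by
      simp only [cycTransition, Pi.ringHom_apply]
      exact Ideal.Quotient.factor_mk _ f)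

/-- The natural ring homomorphism `ℤ[t] → R[[t^Ẑ]]`. -/
def intPolyEmb (R : Type) [CommRing R] : Polynomial ℤ →+* CompletedCycRing R :=
  (polyToCompleted R).comp (Polynomial.mapRingHom (Int.castRingHom R))
open scoped nonZeroDivisors

namespace ZHat

instance : IsAddTorsionFree ZHat where
  nsmul_right_injective n hn := by
    refine (injective_iff_map_eq_zero (nsmulAddMonoidHom (α := ZHat) n)).2 fun x hx => ?_
    ext m
    let N : ℕ+ := ⟨n, Nat.pos_of_ne_zero hn⟩ * m
    obtain ⟨z, hz⟩ : ∃ z : ℤ, x.1 N = z := ⟨(x.1 N).cast, (ZMod.intCast_zmod_cast _).symm⟩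
    have hNz : ((N : ℕ) : ℤ) ∣ n * z := by
      rw [← ZMod.intCast_zmod_eq_zero_iff_dvd]
      simpa [hz] using congrFun (congrArg Subtype.val hx) N
    have hmz : (m : ℤ) ∣ z := by
      replace hNz : ((n * m : ℕ) : ℤ) ∣ n * z := hNz
      push_cast at hNz
      exact (mul_dvd_mul_iff_left (by exact_mod_cast hn)).1 hNz
    rw [← x.2 m N (Dvd.intro_left _ rfl), hz, map_intCast]
    exact (ZMod.intCast_zmod_eq_zero_iff_dvd _ _).2 hmz

theorem eq_zero_of_forall_natCast_dvd (x : ZHat) (hx : ∀ k : ℕ, k ≠ 0 → (k : ZHat) ∣ x) :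
    x = 0 := by
  ext m
  obtain ⟨y, rfl⟩ := hx m m.ne_zero
  change (m : ZMod m) * y.1 m = 0
  rw [ZMod.natCast_self, zero_mul]

end ZHat

theorem geom_sum_range_mul_of_pow_eq_one {S : Type*} [Semiring S] {u : S} {k : ℕ}
    (hu : u ^ k = 1) (M : ℕ) :
    ∑ i ∈ Finset.range (k * M), u ^ i = M • ∑ i ∈ Finset.range k, u ^ i := by
  induction M with
  | zero => simp
  | succ M ih =>
    rw [Nat.mul_succ, Finset.sum_range_add, ih, succ_nsmul]
    simp [pow_add, pow_mul, hu]

namespace Polynomial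

instance instIsAddTorsionFree {R : Type*} [Semiring R] [IsAddTorsionFree R] :
    IsAddTorsionFree R[X] :=
  Function.Injective.isAddTorsionFree (LinearMap.pi (lcoeff R)).toAddMonoidHom
    fun _ _ h ↦ Polynomial.ext (congrFun h)

theorem monic_X_pow_sub_one (R : Type*) [Ring R] {n : ℕ} (hn : n ≠ 0) :
    (X ^ n - 1 : R[X]).Monic := by
  simpa using monic_X_pow_sub_C (1 : R) hn

theorem resultant_ne_zero_of_isCoprime_map {R K : Type*} [CommRing R] [Field K] {φ : R →+* K}
    (hφ : Function.Injective φ) {f g : R[X]} (h : IsCoprime (f.map φ) (g.map φ)) :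
    f.resultant g ≠ 0 := by
  intro h0
  have := congrArg φ h0
  rw [← resultant_map_map, map_zero, ← natDegree_map_eq_of_injective hφ f,
    ← natDegree_map_eq_of_injective hφ g, resultant_eq_zero_iff] at this
  exact this.2 h

theorem isCoprime_map_X_pow_sub_one_of_forall_not_cyclotomic_dvd {f : ℤ[X]}
    (hf : ∀ m, 0 < m → ¬ cyclotomic m ℤ ∣ f) {n : ℕ} (hn : 0 < n) :
    IsCoprime (f.map (Int.castRingHom ℚ)) (X ^ n - 1) := by
  rw [← prod_cyclotomic_eq_X_pow_sub_one hn]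
  refine IsCoprime.prod_right fun m hm => ?_
  have hm0 : 0 < m := Nat.pos_of_mem_divisors hm
  refine ((cyclotomic.irreducible_rat hm0).coprime_iff_not_dvd.2 ?_).symm
  rw [← map_cyclotomic_int, map_dvd_map _ Int.cast_injective (cyclotomic.monic m ℤ)]
  exact hf m hm0

end Polynomial

namespace AdjoinRoot

variable {R : Type*} [CommRing R] {p : R[X]}

theorem isAddTorsionFree_of_monic [IsAddTorsionFree R] (hp : p.Monic) :
    IsAddTorsionFree (AdjoinRoot p) :=
  (mk_leftInverse hp).injective.isAddTorsionFree (modByMonicHom hp).toAddMonoidHom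

theorem eq_zero_of_forall_natCast_dvd (hR : ∀ r : R, (∀ k : ℕ, k ≠ 0 → (k : R) ∣ r) → r = 0)
    (hp : p.Monic) {x : AdjoinRoot p} (hx : ∀ k : ℕ, k ≠ 0 → (k : AdjoinRoot p) ∣ x) :
    x = 0 := by
  suffices modByMonicHom hp x = 0 by rw [← mk_leftInverse hp x, this, map_zero]
  ext i
  refine hR _ fun k hk => ?_
  obtain ⟨y, rfl⟩ := hx k hk
  refine ⟨(modByMonicHom hp y).coeff i, ?_⟩
  rw [← nsmul_eq_mul, map_nsmul, coeff_smul, nsmul_eq_mul]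

end AdjoinRoot

theorem cycTransition_mk {R : Type} [CommRing R] {m n : ℕ+} (h : (m : ℕ) ∣ n) (q : R[X]) :
    cycTransition R h (Ideal.Quotient.mk _ q) = Ideal.Quotient.mk _ q :=
  Ideal.Quotient.factor_mk _ q

namespace CycModN

variable {R : Type} [CommRing R]

instance [IsAddTorsionFree R] (n : ℕ+) : IsAddTorsionFree (CycModN R n) :=
  AdjoinRoot.isAddTorsionFree_of_monic (monic_X_pow_sub_one R n.ne_zero)

theorem mk_X_pow_self (n : ℕ+) :
    (Ideal.Quotient.mk (Ideal.span {X ^ (n : ℕ) - 1}) (X : R[X])) ^ (n : ℕ) = 1 := by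
  rw [← map_pow, ← sub_eq_zero, ← map_one (Ideal.Quotient.mk _), ← map_sub,
    Ideal.Quotient.eq_zero_iff_mem]
  exact Ideal.subset_span rfl

theorem natCast_dvd_cycTransition_of_X_pow_sub_one_mul_eq_zero {d n : ℕ+} (hdn : (d : ℕ) ∣ n)
    (M : ℕ+) {y : CycModN R (n * M)} (hy : Ideal.Quotient.mk _ (X ^ (d : ℕ) - 1) * y = 0) :
    ((M : ℕ) : CycModN R n) ∣ cycTransition R (⟨M, rfl⟩ : (n : ℕ) ∣ (n * M : ℕ+)) y := by
  obtain ⟨k, hk⟩ := hdn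
  obtain ⟨q, rfl⟩ := Ideal.Quotient.mk_surjective y
  set S := ∑ i ∈ Finset.range (k * M), ((X : R[X]) ^ (d : ℕ)) ^ i
  obtain ⟨Q, hQ⟩ : (X ^ ((n * M : ℕ+) : ℕ) - 1 : R[X]) ∣ (X ^ (d : ℕ) - 1) * q := by
    rwa [← Ideal.mem_span_singleton, ← Ideal.Quotient.eq_zero_iff_mem, map_mul]
  have hq : q = S * Q := (monic_X_pow_sub_one R d.ne_zero).isRegular.left <| by
    change (X ^ (d : ℕ) - 1) * q = (X ^ (d : ℕ) - 1) * (S * Q)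
    rw [hQ, ← mul_assoc, mul_geom_sum, ← pow_mul, PNat.mul_coe, hk, mul_assoc]
  have hXd : (Ideal.Quotient.mk (Ideal.span {X ^ (n : ℕ) - 1}) (X : R[X]) ^ (d : ℕ)) ^ k = 1 := by
    rw [← pow_mul, ← hk, mk_X_pow_self]
  rw [cycTransition_mk, hq, map_mul, map_sum]
  simp only [map_pow, geom_sum_range_mul_of_pow_eq_one hXd, nsmul_eq_mul, mul_assoc]
  exact dvd_mul_right _ _

end CycModN

namespace CompletedCycRing

variable {R : Type} [CommRing R]

theorem polyToCompleted_X_pow_sub_one_mem_nonZeroDivisors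
    (hR : ∀ r : R, (∀ k : ℕ, k ≠ 0 → (k : R) ∣ r) → r = 0) (d : ℕ+) :
    polyToCompleted R (X ^ (d : ℕ) - 1) ∈ (CompletedCycRing R)⁰ := by
  refine mem_nonZeroDivisors_iff_left.2 fun g hg => ?_
  have hdvd : ∀ n : ℕ+, (d : ℕ) ∣ n → g.1 n = 0 := fun n hdn =>
    AdjoinRoot.eq_zero_of_forall_natCast_dvd hR (monic_X_pow_sub_one R n.ne_zero) fun k hk => by
      have := CycModN.natCast_dvd_cycTransition_of_X_pow_sub_one_mul_eq_zero hdn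
        ⟨k, Nat.pos_of_ne_zero hk⟩ (congrFun (congrArg Subtype.val hg) _)
      rwa [g.2] at this
  ext n
  rw [← g.2 n (n * d) ⟨d, rfl⟩, hdvd _ (dvd_mul_left _ _), map_zero]
  rfl

theorem intPolyEmb_cyclotomic_mem_nonZeroDivisors
    (hR : ∀ r : R, (∀ k : ℕ, k ≠ 0 → (k : R) ∣ r) → r = 0) (m : ℕ+) :
    intPolyEmb R (cyclotomic m ℤ) ∈ (CompletedCycRing R)⁰ := by
  obtain ⟨c, hc⟩ := cyclotomic.dvd_X_pow_sub_one m ℤ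
  have hX : intPolyEmb R (X ^ (m : ℕ) - 1) = polyToCompleted R (X ^ (m : ℕ) - 1) := by
    simp [intPolyEmb]
  have := polyToCompleted_X_pow_sub_one_mem_nonZeroDivisors hR m
  rw [← hX, hc, map_mul] at this
  exact (mul_mem_nonZeroDivisors.1 this).1

theorem intPolyEmb_apply_eq_zero_of_isCoprime [IsAddTorsionFree R] {f : ℤ[X]} {n : ℕ+}
    (hf : IsCoprime (f.map (Int.castRingHom ℚ)) (X ^ (n : ℕ) - 1)) {g : CompletedCycRing R}
    (hfg : intPolyEmb R f * g = 0) : g.1 n = 0 := by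
  have hr : f.resultant (X ^ (n : ℕ) - 1) ≠ 0 :=
    resultant_ne_zero_of_isCoprime_map (φ := Int.castRingHom ℚ) Int.cast_injective
      (by simpa using hf)
  obtain ⟨p, q, -, -, hpq⟩ := exists_mul_add_mul_eq_C_resultant f (X ^ (n : ℕ) - 1) le_rfl le_rfl
    (Or.inr (by rw [← C_1, natDegree_X_pow_sub_C]; exact n.ne_zero))
  let ψ : ℤ[X] →+* CycModN R n :=
    (Pi.evalRingHom _ n).comp ((CompletedCycRing R).subtype.comp (intPolyEmb R))
  have hψ : ψ (X ^ (n : ℕ) - 1) = 0 := by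
    change Ideal.Quotient.mk _ ((X ^ (n : ℕ) - 1 : ℤ[X]).map (Int.castRingHom R)) = 0
    simp
  have hψf : ψ f * g.1 n = 0 := congrFun (congrArg Subtype.val hfg) n
  have hrg : ψ (C (f.resultant (X ^ (n : ℕ) - 1))) * g.1 n = 0 := by
    rw [← hpq, map_add, map_mul, map_mul, hψ, zero_mul, add_zero, mul_right_comm, hψf, zero_mul]
  rwa [eq_intCast C, map_intCast, ← zsmul_eq_mul,
    IsAddTorsionFree.zsmul_eq_zero_iff_right hr] at hrg

theorem intPolyEmb_mem_nonZeroDivisors [IsAddTorsionFree R]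
    (hR : ∀ r : R, (∀ k : ℕ, k ≠ 0 → (k : R) ∣ r) → r = 0) {f : ℤ[X]} (hf : f ≠ 0) :
    intPolyEmb R f ∈ (CompletedCycRing R)⁰ := by
  induction hd : f.natDegree using Nat.strong_induction_on generalizing f with
  | _ k ih =>
  by_cases hcyc : ∃ m, 0 < m ∧ cyclotomic m ℤ ∣ f
  · obtain ⟨m, hm, q, rfl⟩ := hcyc
    lift m to ℕ+ using hm
    have hq : q ≠ 0 := right_ne_zero_of_mul hf
    have hdeg : q.natDegree < k := by
      rw [← hd, natDegree_mul (cyclotomic_ne_zero m ℤ) hq, natDegree_cyclotomic]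
      have := Nat.totient_pos.2 m.pos
      omega
    rw [map_mul]
    exact mul_mem (intPolyEmb_cyclotomic_mem_nonZeroDivisors hR m) (ih _ hdeg hq rfl)
  · simp only [not_exists, not_and] at hcyc
    refine mem_nonZeroDivisors_iff_left.2 fun g hg => Subtype.ext (funext fun n => ?_)
    exact intPolyEmb_apply_eq_zero_of_isCoprime
      (isCoprime_map_X_pow_sub_one_of_forall_not_cyclotomic_dvd hcyc n.pos) hg

end CompletedCycRing

/-- Every nonzero polynomial `f ∈ ℤ[t]`, regarded as an element of the
completed group ring `Ẑ[[t^Ẑ]]`, is not a zero-divisor. -/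
theorem int_poly_not_zeroDivisor_in_completed_group_ring
    (f : Polynomial ℤ) (hf : f ≠ 0) (g : CompletedCycRing ZHat)
    (hfg : intPolyEmb ZHat f * g = 0) : g = 0 :=
  mem_nonZeroDivisors_iff_left.1
    (CompletedCycRing.intPolyEmb_mem_nonZeroDivisors ZHat.eq_zero_of_forall_natCast_dvd hf) g hfg

end
end
end

section
/- (Weber) Let f(t) and g(t) be nonzero polynomials in ℤ[t] such that the leading coefficient and the constant term of g(t) are each equal to ±1. If f(t) and g(t) have no common root in an algebraic closure of ℚ, then the quotient ring ℤ[t]/(f(t), g(t)) is a finite group whose order equals |R(f(t), g(t))|. -/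
open Polynomial

noncomputable section

/-- The Sylvester matrix of two polynomials `f, g ∈ ℤ[t]` of degrees `d, e`: the
`(d+e) × (d+e)` matrix whose first `e` rows are the shifted coefficient sequences
`a₀ a₁ ⋯ a_d` of `f` (with `a_k` the coefficient of `t^{d-k}`) and whose last `d` rows are
the shifted coefficient sequences `b₀ b₁ ⋯ b_e` of `g`. -/
def sylvesterMatrix (f g : Polynomial ℤ) :
    Matrix (Fin (f.natDegree + g.natDegree)) (Fin (f.natDegree + g.natDegree)) ℤ :=
  fun i j =>
    if (i : ℕ) < g.natDegree then
      (if (i : ℕ) ≤ (j : ℕ) ∧ (j : ℕ) ≤ (i : ℕ) + f.natDegree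
        then f.coeff (f.natDegree - ((j : ℕ) - (i : ℕ))) else 0)
    else
      (if ((i : ℕ) - g.natDegree) ≤ (j : ℕ) ∧ (j : ℕ) ≤ ((i : ℕ) - g.natDegree) + g.natDegree
        then g.coeff (g.natDegree - ((j : ℕ) - ((i : ℕ) - g.natDegree))) else 0)

/-- The resultant `R(f,g)` of two polynomials `f, g ∈ ℤ[t]`, the determinant of their
Sylvester matrix. -/
def resultant (f g : Polynomial ℤ) : ℤ :=
  (sylvesterMatrix f g).det

/-- A polynomial `f(t) = Σ_{i=0}^d a_i t^{d-i}` of degree `d` is reciprocal if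
`a_i = a_{d-i}` for every `i`. -/
def IsReciprocal (f : Polynomial ℤ) : Prop :=
  ∀ i ≤ f.natDegree, f.coeff i = f.coeff (f.natDegree - i)

/-!
Write `d = deg f`, `e = deg g`. Since the leading coefficient of `g` is a unit, every class of
`ℤ[t]/(f, g)` is represented by a polynomial of degree `< d + e` (reduce modulo `g`), and such a
polynomial lies in `(f, g)` exactly when it is `f q + g p` with `deg p < d`, `deg q < e` (reduce
the cofactor of `f` modulo `g`). So `ℤ[t]/(f, g)` is the cokernel of the Sylvester map
`(p, q) ↦ f q + g p : ℤ^d × ℤ^e → ℤ^(d+e)`, whose matrix is the Sylvester matrix. Its determinant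
`R(f, g)` is nonzero because `f` and `g` are coprime over `ℚ`, and the cokernel of an injective
endomorphism of `ℤ^n` has order `|det|` (Smith normal form).
-/

open scoped Matrix

theorem sylvesterMatrix_eq_transpose_submatrix_rev (f g : ℤ[X]) :
    sylvesterMatrix f g =
      ((sylvester f g f.natDegree g.natDegree).submatrix Fin.rev Fin.rev)ᵀ := by
  ext i j
  have hi := i.isLt
  have hj := j.isLt
  rcases lt_or_ge (i : ℕ) g.natDegree with h | h
  · have hrev : i.rev = Fin.natAdd f.natDegree ⟨g.natDegree - 1 - i, by omega⟩ :=
      Fin.ext (by simp only [Fin.val_rev, Fin.natAdd_mk]; omega)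
    simp only [sylvesterMatrix, Matrix.transpose_apply, Matrix.submatrix_apply, sylvester,
      Matrix.of_apply, hrev, Fin.addCases_right, Fin.val_rev, Set.mem_Icc, if_pos h]
    split_ifs <;> first | rfl | omega | (congr 1; omega)
  · have hrev : i.rev = Fin.castAdd g.natDegree ⟨f.natDegree + g.natDegree - 1 - i, by omega⟩ :=
      Fin.ext (by simp only [Fin.val_rev, Fin.castAdd_mk]; omega)
    simp only [sylvesterMatrix, Matrix.transpose_apply, Matrix.submatrix_apply, sylvester,
      Matrix.of_apply, hrev, Fin.addCases_left, Fin.val_rev, Set.mem_Icc, if_neg h.not_gt]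
    split_ifs <;> first | rfl | omega | (congr 1; omega)

theorem resultant_eq_polynomial_resultant (f g : ℤ[X]) :
    _root_.resultant f g = Polynomial.resultant f g := by
  rw [_root_.resultant, sylvesterMatrix_eq_transpose_submatrix_rev, Matrix.det_transpose]
  exact Matrix.det_submatrix_equiv_self Fin.revPerm _

theorem Submodule.card_quotient_range_eq_natAbs_det {ι M N : Type*} [Fintype ι] [DecidableEq ι]
    [AddCommGroup M] [AddCommGroup N] (bM : Module.Basis ι ℤ M) (bN : Module.Basis ι ℤ N)
    (φ : M →ₗ[ℤ] N) (hφ : Function.Injective φ) :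
    Nat.card (N ⧸ LinearMap.range φ) = (LinearMap.toMatrix bM bN φ).det.natAbs := by
  have := Module.Free.of_basis bN
  have := Module.Finite.of_basis bN
  rw [← Submodule.natAbs_det_basis_change bN _ (bM.map (LinearEquiv.ofInjective φ hφ)),
    Module.Basis.det_apply, LinearMap.toMatrix_eq_basisToMatrix]
  rfl

namespace Polynomial

variable {R : Type*} [CommRing R] {f g : R[X]}

theorem resultant_ne_zero_of_forall_not_common_root {K : Type*} [Field K] [IsAlgClosed K]
    [Algebra R K] (hinj : Function.Injective (algebraMap R K))
    (hroot : ∀ z : K, ¬ (aeval z f = 0 ∧ aeval z g = 0)) : f.resultant g ≠ 0 := by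
  have hcop : IsCoprime (f.map (algebraMap R K)) (g.map (algebraMap R K)) :=
    (isCoprime_iff_aeval_ne_zero_of_isAlgClosed K K _ _).2 fun z => by
      simpa only [aeval_map_algebraMap, not_and_or] using hroot z
  have := resultant_ne_zero _ _ hcop
  rwa [resultant_map_map, natDegree_map_eq_of_injective hinj,
    natDegree_map_eq_of_injective hinj, map_ne_zero_iff _ hinj] at this

theorem sylvesterMap_injective [IsDomain R] {m n : ℕ} (hf : f.natDegree ≤ m)
    (hg : g.natDegree ≤ n) (hres : f.resultant g m n ≠ 0) :
    Function.Injective (sylvesterMap f g hf hg) := by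
  refine (injective_iff_map_eq_zero _).2 fun x hx => ?_
  have key := congr($(adjSylvester_comp_sylveserMap f g hf hg) x)
  rw [LinearMap.comp_apply, hx, map_zero, LinearMap.smul_apply, LinearMap.id_apply] at key
  exact (smul_eq_zero.1 key.symm).resolve_left hres

theorem degree_lt_of_degree_mul_lt (hg : IsUnit g.leadingCoeff) {p : R[X]} {n : ℕ}
    (h : (g * p).degree < (g.natDegree + n : ℕ)) : p.degree < n := by
  rcases eq_or_ne p 0 with rfl | hp
  · simp
  have hlc : g.leadingCoeff * p.leadingCoeff ≠ 0 := by
    rwa [Ne, hg.mul_right_eq_zero, leadingCoeff_eq_zero]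
  have hg0 : g ≠ 0 := fun h0 => by simp [h0] at hlc
  rw [degree_mul' hlc, degree_eq_natDegree hg0, degree_eq_natDegree hp] at h
  rw [degree_eq_natDegree hp]
  have : g.natDegree + p.natDegree < g.natDegree + n := by exact_mod_cast h
  exact_mod_cast (by omega : p.natDegree < n)

theorem modByMonic_mem_degreeLT {q : R[X]} (hq : q.Monic) (p : R[X]) :
    p %ₘ q ∈ R[X]_q.natDegree := by
  nontriviality R
  rw [mem_degreeLT, ← degree_eq_natDegree hq.ne_zero]
  exact degree_modByMonic_lt p hq

noncomputable def degreeLTToQuotientSpanPair (f g : R[X]) :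
    R[X]_(f.natDegree + g.natDegree) →ₗ[R] R[X] ⧸ Ideal.span {f, g} :=
  (Ideal.Quotient.mkₐ R _).toLinearMap ∘ₗ (degreeLT R _).subtype

theorem degreeLTToQuotientSpanPair_surjective (hg : IsUnit g.leadingCoeff) :
    Function.Surjective (degreeLTToQuotientSpanPair f g) := by
  obtain ⟨c, hG⟩ : ∃ c : R, (C c * g).Monic :=
    ⟨_, monic_C_mul_of_mul_leadingCoeff_eq_one hg.val_inv_mul⟩
  rintro ⟨p⟩
  refine ⟨⟨p %ₘ (C c * g), degreeLT_mono ?_ (modByMonic_mem_degreeLT hG p)⟩,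
    Ideal.Quotient.eq.2 ?_⟩
  · exact (natDegree_C_mul_le _ _).trans (Nat.le_add_left _ _)
  · change p %ₘ (C c * g) - p ∈ _
    rw [modByMonic_eq_sub_mul_div, sub_sub_cancel_left, mul_comm, ← mul_assoc]
    exact neg_mem (Ideal.mul_mem_left _ _ (Ideal.subset_span (by simp)))

theorem ker_degreeLTToQuotientSpanPair (hg : IsUnit g.leadingCoeff) :
    LinearMap.ker (degreeLTToQuotientSpanPair f g) =
      LinearMap.range (sylvesterMap f g le_rfl le_rfl) := by
  ext ⟨x, hx⟩
  simp only [degreeLTToQuotientSpanPair, LinearMap.mem_ker, LinearMap.coe_comp,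
    Function.comp_apply, Submodule.coe_subtype, AlgHom.toLinearMap_apply,
    Ideal.Quotient.mkₐ_eq_mk, Ideal.Quotient.eq_zero_iff_mem, LinearMap.mem_range]
  constructor
  · intro hmem
    obtain ⟨a, b, rfl⟩ := Ideal.mem_span_pair.1 hmem
    obtain ⟨c, hG⟩ : ∃ c : R, (C c * g).Monic :=
      ⟨_, monic_C_mul_of_mul_leadingCoeff_eq_one hg.val_inv_mul⟩
    set a' := a %ₘ (C c * g)
    set b' := b + C c * (a /ₘ (C c * g)) * f
    have hsum : a * f + b * g = f * a' + g * b' := by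
      linear_combination (-f) * modByMonic_add_div a (C c * g)
    have ha' : a' ∈ R[X]_g.natDegree :=
      degreeLT_mono (natDegree_C_mul_le _ _) (modByMonic_mem_degreeLT hG a)
    have hfa : f * a' ∈ R[X]_(f.natDegree + g.natDegree) := by
      simpa using (sylvesterMap f g le_rfl le_rfl (0, ⟨a', ha'⟩)).2
    have hgb : g * b' ∈ R[X]_(g.natDegree + f.natDegree) := by
      rw [add_comm, ← add_sub_cancel_left (f * a') (g * b'), ← hsum]
      exact sub_mem hx hfa
    have hb' : b' ∈ R[X]_f.natDegree :=
      mem_degreeLT.2 (degree_lt_of_degree_mul_lt hg (mem_degreeLT.1 hgb))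
    exact ⟨(⟨b', hb'⟩, ⟨a', ha'⟩), Subtype.ext hsum.symm⟩
  · rintro ⟨⟨p, q⟩, hpq⟩
    rw [← show f * q + g * p = x from congr_arg Subtype.val hpq]
    exact Ideal.add_mem _ (Ideal.mul_mem_right _ _ (Ideal.subset_span (by simp)))
      (Ideal.mul_mem_right _ _ (Ideal.subset_span (by simp)))

noncomputable def quotientRangeSylvesterMapEquiv (hg : IsUnit g.leadingCoeff) :
    (R[X]_(f.natDegree + g.natDegree) ⧸ LinearMap.range (sylvesterMap f g le_rfl le_rfl)) ≃ₗ[R]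
      R[X] ⧸ Ideal.span {f, g} :=
  (Submodule.quotEquivOfEq _ _ (ker_degreeLTToQuotientSpanPair hg).symm).trans
    ((degreeLTToQuotientSpanPair f g).quotKerEquivOfSurjective
      (degreeLTToQuotientSpanPair_surjective hg))

end Polynomial

theorem weber_card_quotient_eq_resultant_general (f g : Polynomial ℤ)
    (hlead : g.leadingCoeff = 1 ∨ g.leadingCoeff = -1)
    (hnoroot : ∀ z : AlgebraicClosure ℚ,
      ¬ (Polynomial.aeval z f = 0 ∧ Polynomial.aeval z g = 0)) :
    Finite (Polynomial ℤ ⧸ Ideal.span ({f, g} : Set (Polynomial ℤ))) ∧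
    Nat.card (Polynomial ℤ ⧸ Ideal.span ({f, g} : Set (Polynomial ℤ)))
      = (_root_.resultant f g).natAbs := by
  have hunit : IsUnit g.leadingCoeff := by rcases hlead with h | h <;> simp [h]
  have hres : f.resultant g ≠ 0 := resultant_ne_zero_of_forall_not_common_root
    (algebraMap ℤ (AlgebraicClosure ℚ)).injective_int hnoroot
  have hcard : Nat.card (ℤ[X] ⧸ Ideal.span {f, g}) = (_root_.resultant f g).natAbs := by
    rw [← Nat.card_congr (quotientRangeSylvesterMapEquiv hunit).toEquiv,
      Submodule.card_quotient_range_eq_natAbs_det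
        (((degreeLT.basis ℤ _).prod (degreeLT.basis ℤ _)).reindex finSumFinEquiv)
        (degreeLT.basis ℤ _) _ (sylvesterMap_injective le_rfl le_rfl hres),
      toMatrix_sylvesterMap', resultant_eq_polynomial_resultant, Polynomial.resultant]
  refine ⟨Nat.finite_of_card_ne_zero ?_, hcard⟩
  rw [hcard, resultant_eq_polynomial_resultant]
  exact Int.natAbs_ne_zero.2 hres

/-- **Weber.** If `f, g ∈ ℤ[t]` are nonzero, the leading coefficient and the
constant term of `g` are each `±1`, and `f` and `g` have no common root in an algebraic
closure of `ℚ`, then `ℤ[t]/(f, g)` is a finite group of order `|R(f, g)|`. -/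
theorem weber_card_quotient_eq_resultant (f g : Polynomial ℤ)
    (hf : f ≠ 0) (hg : g ≠ 0)
    (hlead : g.leadingCoeff = 1 ∨ g.leadingCoeff = -1)
    (hconst : g.coeff 0 = 1 ∨ g.coeff 0 = -1)
    (hnoroot : ∀ z : AlgebraicClosure ℚ,
      ¬ (Polynomial.aeval z f = 0 ∧ Polynomial.aeval z g = 0)) :
    Finite (Polynomial ℤ ⧸ Ideal.span ({f, g} : Set (Polynomial ℤ))) ∧
    Nat.card (Polynomial ℤ ⧸ Ideal.span ({f, g} : Set (Polynomial ℤ)))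
      = (_root_.resultant f g).natAbs :=
  weber_card_quotient_eq_resultant_general f g hlead hnoroot

end
end

section
/- Let f ∈ ℤ[t] be a nonzero polynomial that is not divisible by any cyclotomic polynomial (equivalently, f(ζ) ≠ 0 for every root of unity ζ in an algebraic closure of ℚ). Then for every prime p and every n ≥ 1, the image of f in ℤ_p[t]/(tⁿ−1) is not a zero-divisor. -/
open Polynomial


/-- Let `f ∈ ℤ[t]` be a nonzero polynomial not divisible by any cyclotomic
polynomial. Then for every prime `p` and every `n ≥ 1`, the image of `f` in
`ℤ_p[t]/(tⁿ-1)` is not a zero-divisor. -/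
theorem int_poly_not_zeroDivisor_mod_X_pow_sub_one
    (f : Polynomial ℤ) (hf : f ≠ 0)
    (hcyc : ∀ m : ℕ, 0 < m → ¬ (Polynomial.cyclotomic m ℤ ∣ f))
    (p : ℕ) [Fact p.Prime] (n : ℕ) (hn : 1 ≤ n)
    (g : Polynomial (PadicInt p) ⧸
      Ideal.span {(X : Polynomial (PadicInt p)) ^ n - 1})
    (hfg : Ideal.Quotient.mk (Ideal.span {(X : Polynomial (PadicInt p)) ^ n - 1})
        (f.map (Int.castRingHom (PadicInt p))) * g = 0) :
    g = 0 := by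
  obtain ⟨G, rfl⟩ := Ideal.Quotient.mk_surjective g
  rw [← map_mul, Ideal.Quotient.eq_zero_iff_mem, Ideal.mem_span_singleton] at hfg
  rw [Ideal.Quotient.eq_zero_iff_mem, Ideal.mem_span_singleton]
  -- coprimality of `f` and `X^n - 1` over `ℚ`
  have hnpos : 0 < n := hn
  have hcopQ : IsCoprime ((X : ℚ[X]) ^ n - 1) (f.map (Int.castRingHom ℚ)) := by
    rw [← prod_cyclotomic_eq_X_pow_sub_one hnpos]
    refine IsCoprime.prod_left fun d hd => ?_
    have hdpos : 0 < d := Nat.pos_of_mem_divisors hd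
    have hirr : Irreducible (cyclotomic d ℚ) := cyclotomic.irreducible_rat hdpos
    rw [hirr.coprime_iff_not_dvd, ← map_cyclotomic_int,
      map_dvd_map (Int.castRingHom ℚ) Int.cast_injective
        (cyclotomic.monic d ℤ)]
    exact hcyc d hdpos
  -- transport to `ℚ_[p]`
  have hcopQp : IsCoprime ((X : (Padic p)[X]) ^ n - 1)
      (f.map (Int.castRingHom (Padic p))) := by
    have := hcopQ.map (Polynomial.mapRingHom (Rat.castHom (Padic p)))
    simpa [Polynomial.map_map, ← RingHom.comp_apply,
      (by ext x; simp : (Rat.castHom (Padic p)).comp (Int.castRingHom ℚ)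
        = Int.castRingHom (Padic p))] using this
  -- the divisibility over `ℚ_[p]`
  have hdvdQp : ((X : (Padic p)[X]) ^ n - 1) ∣
      G.map (PadicInt.Coe.ringHom) := by
    apply hcopQp.dvd_of_dvd_mul_left
    obtain ⟨q, hq⟩ := hfg
    refine ⟨q.map PadicInt.Coe.ringHom, ?_⟩
    have := congrArg (Polynomial.map (PadicInt.Coe.ringHom (p := p))) hq
    rw [Polynomial.map_mul, Polynomial.map_mul, Polynomial.map_sub,
      Polynomial.map_pow, Polynomial.map_X, Polynomial.map_one,
      Polynomial.map_map] at this
    rwa [(by ext x; simp : (PadicInt.Coe.ringHom (p := p)).comp (Int.castRingHom (PadicInt p)) = Int.castRingHom (Padic p))] at this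
  -- descend to `ℤ_[p]`
  have hmonic : ((X : (PadicInt p)[X]) ^ n - 1).Monic :=
    monic_X_pow_sub_C 1 hnpos.ne'
  rw [← map_dvd_map (PadicInt.Coe.ringHom) Subtype.coe_injective hmonic]
  simpa using hdvdQp
end
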